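/- Let V have basis {v_k : k ∈ ℤ}. For fixed a ∈ ℂ*, the action (t1^m t2^n).v_k = (-1)^{n+1} (a q^{-k-m})^n v_{k+m} defines an L-module structure on V. -/
import Mathlib


/-- Bracket of basis elements of the centerless q-analog Virasoro-like algebra. -/
noncomputable def qlBr (q : ℂ) (p r : ℤ × ℤ) : (ℤ × ℤ) →₀ ℂ :=
  if p.1 + r.1 = 0 ∧ p.2 + r.2 = 0 then 0
  else (q ^ (p.2 * r.1) - q ^ (p.1 * r.2)) • Finsupp.single (p.1 + r.1, p.2 + r.2) 1

/-- Action of the basis element `t1^{p.1} t2^{p.2}` on the basis vector `v_k`: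
`(t1^m t2^n).v_k = (-1)^{n+1} (a q^{-k-m})^n v_{k+m}`. -/
noncomputable def act (q a : ℂ) (p : ℤ × ℤ) (k : ℤ) : ℤ →₀ ℂ :=
  ((-1 : ℂ) ^ (p.2 + 1) * (a * q ^ (-k - p.1)) ^ p.2) • Finsupp.single (k + p.1) (1 : ℂ)

/-- The action extended linearly to all of `V`. -/
noncomputable def actExt (q a : ℂ) (p : ℤ × ℤ) (f : ℤ →₀ ℂ) : ℤ →₀ ℂ :=
  f.sum fun k c => c • act q a p k

/-- The action of a general element of `L`. -/
noncomputable def actL (q a : ℂ) (x : (ℤ × ℤ) →₀ ℂ) (f : ℤ →₀ ℂ) : ℤ →₀ ℂ :=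
  x.sum fun p c => c • actExt q a p f

lemma actExt_single (q a : ℂ) (p : ℤ × ℤ) (k : ℤ) (c : ℂ) :
    actExt q a p (Finsupp.single k c) = c • act q a p k := by
  unfold actExt
  rw [Finsupp.sum_single_index (by simp)]

lemma act_eq (q a : ℂ) (p : ℤ × ℤ) (k : ℤ) :
    act q a p k =
      Finsupp.single (k + p.1) ((-1 : ℂ) ^ (p.2 + 1) * (a * q ^ (-k - p.1)) ^ p.2) := by
  unfold act
  rw [Finsupp.smul_single', mul_one]

/-- This action makes `V` an `L`-module: `[x,y].v = x.(y.v) - y.(x.v)` for all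
basis elements `x, y` of `L` and all basis vectors `v_k`. -/
theorem act_is_module (q a : ℂ) (hq0 : q ≠ 0) (hq : ∀ n : ℕ, 0 < n → q ^ n ≠ 1)
    (ha : a ≠ 0) (p r : ℤ × ℤ) (hp : p ≠ (0, 0)) (hr : r ≠ (0, 0)) (k : ℤ) :
    actL q a (qlBr q p r) (Finsupp.single k 1) =
      actExt q a p (actExt q a r (Finsupp.single k 1)) -
        actExt q a r (actExt q a p (Finsupp.single k 1)) := by
  have hX : a * q ^ (-k - p.1 - r.1) ≠ 0 := mul_ne_zero ha (zpow_ne_zero _ hq0)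
  set X := a * q ^ (-k - p.1 - r.1) with hXdef
  have h1 : a * q ^ (-k - r.1) = X * q ^ p.1 := by
    rw [hXdef, mul_assoc, ← zpow_add₀ hq0]; congr 2; ring
  have h2 : a * q ^ (-k - p.1) = X * q ^ r.1 := by
    rw [hXdef, mul_assoc, ← zpow_add₀ hq0]; congr 2; ring
  have h3 : a * q ^ (-(k + r.1) - p.1) = X := by rw [hXdef]; congr 2; ring
  have h4 : a * q ^ (-(k + p.1) - r.1) = X := by rw [hXdef]; congr 2; ring
  -- RHS
  rw [actExt_single, actExt_single, one_smul, one_smul, act_eq q a r k, act_eq q a p k,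
    actExt_single, actExt_single, act_eq q a p (k + r.1), act_eq q a r (k + p.1),
    Finsupp.smul_single', Finsupp.smul_single', h1, h2, h3, h4]
  have hs : ((-1 : ℂ) ^ (r.2 + 1) * (X * q ^ p.1) ^ r.2) * ((-1 : ℂ) ^ (p.2 + 1) * X ^ p.2)
      = (-1 : ℂ) ^ (p.2 + r.2) * X ^ (p.2 + r.2) * q ^ (p.1 * r.2) := by
    rw [mul_zpow, ← zpow_mul, zpow_add₀ hX, zpow_add₀ (by norm_num : (-1:ℂ) ≠ 0),
      zpow_add₀ (by norm_num : (-1:ℂ) ≠ 0), zpow_add₀ (by norm_num : (-1:ℂ) ≠ 0)]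
    ring
  have hs' : ((-1 : ℂ) ^ (p.2 + 1) * (X * q ^ r.1) ^ p.2) * ((-1 : ℂ) ^ (r.2 + 1) * X ^ r.2)
      = (-1 : ℂ) ^ (p.2 + r.2) * X ^ (p.2 + r.2) * q ^ (r.1 * p.2) := by
    rw [mul_zpow, ← zpow_mul, zpow_add₀ hX, zpow_add₀ (by norm_num : (-1:ℂ) ≠ 0),
      zpow_add₀ (by norm_num : (-1:ℂ) ≠ 0), zpow_add₀ (by norm_num : (-1:ℂ) ≠ 0)]
    ring
  rw [hs, hs', add_right_comm k r.1 p.1, ← Finsupp.single_sub, ← mul_sub]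
  -- LHS
  unfold qlBr
  split_ifs with h
  · -- p + r = 0
    rw [actL, Finsupp.sum_zero_index]
    have e1 : r.1 = -p.1 := by omega
    have e2 : r.2 = -p.2 := by omega
    have hpr : p.1 * r.2 = r.1 * p.2 := by rw [e1, e2]; ring
    rw [hpr, sub_self, mul_zero]; simp
  · rw [actL, Finsupp.smul_single', mul_one,
      Finsupp.sum_single_index (by simp), actExt_single, one_smul, act_eq,
      Finsupp.smul_single']
    dsimp only
    have h5 : a * q ^ (-k - (p.1 + r.1)) = X := by rw [hXdef]; congr 2; ring
    rw [h5, ← add_assoc]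
    congr 1
    rw [zpow_add₀ (by norm_num : (-1:ℂ) ≠ 0)]
    have hc : q ^ (p.2 * r.1) = q ^ (r.1 * p.2) := by rw [mul_comm]
    rw [hc]
    ring
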